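/- The set S = ∪_{N≥2} Δ_N(Σ_N) ⊆ ℕ^ℕ is a scrambled set for the shift map σ: for any distinct u, v ∈ S, limsup_n d(σ^n u, σ^n v) > 0 and liminf_n d(σ^n u, σ^n v) = 0, where d(x,y) = 2^{-inf{j≥0 : x_{j+1} ≠ y_{j+1}}}. -/

import Mathlib

open MeasureTheory Filter Set

/-- The Gauss map `T(x) = 1/x - ⌊1/x⌋` (with `T 0 = 0`). -/
noncomputable def gaussMap (x : ℝ) : ℝ := if x = 0 then 0 else 1/x - ⌊1/x⌋

/-- `pquot x n` is the `(n+1)`-st partial quotient `a_{n+1}(x) = ⌊1 / T^n x⌋`. -/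
noncomputable def pquot (x : ℝ) (n : ℕ) : ℕ := (⌊1 / (gaussMap^[n] x)⌋).toNat

/-- One step of the continuant recursion `q_{j+1} = b_{j+1} q_j + q_{j-1}`. -/
def cdStep (p : ℕ × ℕ) (b : ℕ) : ℕ × ℕ := (b * p.1 + p.2, p.1)

/-- Denominator `q_n(b_1,…,b_n)` of the finite continued fraction `[b_1,…,b_n]`. -/
def contDenom (w : List ℕ) : ℕ := (w.foldl cdStep (1, 0)).1

/-- Numerator `p_n(b_1,…,b_n)` of the finite continued fraction `[b_1,…,b_n]`. -/
def contNum (w : List ℕ) : ℕ := (w.foldl cdStep (0, 1)).1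

/-- The continued fraction cylinder `I(w) = {x ∈ [0,1) : a_i(x) = w_i, 1 ≤ i ≤ |w|}`. -/
def cyl (w : List ℕ) : Set ℝ :=
  {x | x ∈ Set.Ico (0:ℝ) 1 ∧ ∀ i < w.length, pquot x i = w.getD i 0}

open scoped Classical in
/-- The metric `d(x,y) = 2^{-inf{j ≥ 0 : x_{j+1} ≠ y_{j+1}}}` on `ℕ^ℕ` (0-indexed). -/
noncomputable def dseq (x y : ℕ → ℕ) : ℝ :=
  if h : ∃ j, x j ≠ y j then (2:ℝ)⁻¹ ^ (Nat.find h) else 0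

/-- The one-sided shift on `ℕ^ℕ`. -/
def shift (x : ℕ → ℕ) : ℕ → ℕ := fun n => x (n+1)

/-- The symbolic space `Σ_N = {1,…,N}^ℕ` inside `ℕ^ℕ`. -/
def SigmaN (N : ℕ) : Set (ℕ → ℕ) := {x | ∀ i, 1 ≤ x i ∧ x i ≤ N}

/-- `g_N(x) = (N, 1, x_1, 1,1, x_1,x_2, 1,1,1, x_1,x_2,x_3, …)` (0-indexed). -/
def gN (N : ℕ) (x : ℕ → ℕ) : ℕ → ℕ := fun n =>
  if n = 0 then N else
    let j := n - 1
    let k := (Nat.sqrt (4*j+1) + 1) / 2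
    let o := j - k*(k-1)
    if o < k then 1 else x (o - k)

/-- `Θ_N(x) = (x_1, x_1,x_2, x_1,x_2,x_3, …)` (0-indexed). -/
def thetaN (x : ℕ → ℕ) : ℕ → ℕ := fun j =>
  let k := (Nat.sqrt (8*j+1) + 1) / 2
  x (j - k*(k-1)/2)

/-- The index set `R = ∪_m {m³ + t : 1 ≤ t ≤ m}`. -/
def inR (n : ℕ) : Prop := ∃ m, 1 ≤ m ∧ m^3 + 1 ≤ n ∧ n ≤ m^3 + m

instance : DecidablePred inR := fun n =>
  decidable_of_iff (∃ m ∈ Finset.Icc 1 n, m^3 + 1 ≤ n ∧ n ≤ m^3 + m) (by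
    constructor
    · rintro ⟨m, hm, h⟩; exact ⟨m, (Finset.mem_Icc.mp hm).1, h⟩
    · rintro ⟨m, h1, h2, h3⟩
      refine ⟨m, Finset.mem_Icc.mpr ⟨h1, ?_⟩, h2, h3⟩
      have : m ≤ m^3 := Nat.le_self_pow (by norm_num) m
      omega)

/-- `t(n) = #{k ≥ 1 : r_k ≤ n}`, the number of elements of `R` at most `n`. -/
def tcount (n : ℕ) : ℕ := ((Finset.Icc 1 n).filter inR).card

/-- `Ψ_N(x,y)`: put `y_k` at position `r_k ∈ R` and fill the other
positions with the entries of `x` in order (positions are 1-indexed `i+1`). -/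
def psiN (x y : ℕ → ℕ) : ℕ → ℕ := fun i =>
  let n := i + 1
  if inR n then y (tcount n - 1) else x (n - tcount n - 1)

/-- `Δ_N(x) = Ψ_N(x, Θ_N(g_N(x)))`. -/
def deltaN (N : ℕ) (x : ℕ → ℕ) : ℕ → ℕ := psiN x (thetaN (gN N x))

/-- The value `[a_1, a_2, …]` of an infinite continued fraction, as the limit
of its convergents `p_n/q_n`. -/
noncomputable def cfVal (a : ℕ → ℕ) : ℝ :=
  limUnder atTop fun n => (contNum (List.ofFn fun i : Fin n => a i) : ℝ) /
    (contDenom (List.ofFn fun i : Fin n => a i) : ℝ)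

/-- The orbit of `x` under the Gauss map is dense in `[0,1]`. -/
def gaussOrbitDense (x : ℝ) : Prop :=
  Set.Icc (0:ℝ) 1 ⊆ closure (Set.range fun n => gaussMap^[n] x)

/-- The set `D` of points of `[0,1)` with dense Gauss orbit. -/
def Dset : Set ℝ := {x ∈ Set.Ico (0:ℝ) 1 | gaussOrbitDense x}

/-- The set `D^c` of points of `[0,1)` with non-dense Gauss orbit. -/
def Dcset : Set ℝ := {x ∈ Set.Ico (0:ℝ) 1 | ¬ gaussOrbitDense x}


/-- The set `S = ∪_{N ≥ 2} Δ_N(Σ_N)`. -/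
def Sset : Set (ℕ → ℕ) := ⋃ N ∈ {N : ℕ | 2 ≤ N}, deltaN N '' SigmaN N


/-!
Every window `[m³ + 1, m³ + m]` of `R` carries the `m`-th block of `Θ_N(g_N(x))`, which is the
prefix of length `m` of `g_N(x)`; hence along the times `m³ + p` the shifts of `Δ_N(x)` start with
the segment of `g_N(x)` beginning at `p`, for windows as long as we like. For distinct points of
`S` the sequences `g_N(x)` and `g_M(y)` differ somewhere (they start with `N` and contain every
coordinate of `x`), which makes the distance `1` infinitely often; and both contain arbitrarily
long blocks of `1`s at the same positions, which makes the distance arbitrarily small infinitely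
often.
-/

lemma half_sqrt_add_one_eq {d n : ℕ} (h₁ : (2 * d + 1) * (2 * d + 1) ≤ n)
    (h₂ : n < (2 * d + 3) * (2 * d + 3)) : (Nat.sqrt n + 1) / 2 = d + 1 := by
  have := Nat.le_sqrt.mpr h₁
  have := Nat.sqrt_lt.mpr h₂
  omega

lemma succ_mul_self_div_two_mul_two (d : ℕ) : (d + 1) * d / 2 * 2 = (d + 1) * d :=
  Nat.div_two_mul_two_of_even (mul_comm d (d + 1) ▸ Nat.even_mul_succ_self d)

lemma thetaN_apply (z : ℕ → ℕ) {d r : ℕ} (hr : r ≤ d) :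
    thetaN z ((d + 1) * d / 2 + r) = z r := by
  have hT := succ_mul_self_div_two_mul_two d
  have hk : (Nat.sqrt (8 * ((d + 1) * d / 2 + r) + 1) + 1) / 2 = d + 1 :=
    half_sqrt_add_one_eq (by nlinarith) (by nlinarith)
  simp only [thetaN, hk, Nat.add_sub_cancel]
  congr 1
  omega

lemma gN_apply_add_one (N : ℕ) (x : ℕ → ℕ) {d o : ℕ} (ho : o ≤ 2 * d + 1) :
    gN N x ((d + 1) * d + o + 1) = if o ≤ d then 1 else x (o - (d + 1)) := by
  have hk : (Nat.sqrt (4 * ((d + 1) * d + o) + 1) + 1) / 2 = d + 1 :=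
    half_sqrt_add_one_eq (by nlinarith) (by nlinarith)
  simp only [gN, Nat.add_sub_cancel, hk, if_neg (Nat.succ_ne_zero _), Nat.add_sub_cancel_left,
    Nat.lt_succ_iff]

lemma gN_apply_eq_one (N : ℕ) (x : ℕ → ℕ) {d i : ℕ} (hi : i ≤ d) :
    gN N x ((d + 1) * d + i + 1) = 1 := by
  rw [gN_apply_add_one N x (by omega), if_pos hi]

lemma gN_apply_coord (N : ℕ) (x : ℕ → ℕ) (d : ℕ) :
    gN N x ((d + 1) * d + (2 * d + 1) + 1) = x d := by
  rw [gN_apply_add_one N x le_rfl, if_neg (by omega)]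
  congr 1
  omega

lemma gN_inj {N M : ℕ} {x y : ℕ → ℕ} : gN N x = gN M y ↔ N = M ∧ x = y := by
  refine ⟨fun h => ⟨congrFun h 0, funext fun d => ?_⟩, by rintro ⟨rfl, rfl⟩; rfl⟩
  simpa only [gN_apply_coord] using congrFun h ((d + 1) * d + (2 * d + 1) + 1)

lemma inR_cube_add {m t : ℕ} (ht : 1 ≤ t) (htm : t ≤ m) : inR (m ^ 3 + t) :=
  ⟨m, by omega, by omega, by omega⟩

lemma not_inR_of_cube_add_lt {m n : ℕ} (h₁ : m ^ 3 + m < n) (h₂ : n ≤ (m + 1) ^ 3) :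
    ¬ inR n := by
  rintro ⟨k, -, hk₁, hk₂⟩
  rcases le_or_gt k m with h | h
  · have := Nat.pow_le_pow_left h 3
    omega
  · have := Nat.pow_le_pow_left (show m + 1 ≤ k by omega) 3
    omega

lemma tcount_add_one (n : ℕ) : tcount (n + 1) = tcount n + if inR (n + 1) then 1 else 0 := by
  rw [tcount, ← Finset.insert_Icc_right_eq_Icc_add_one (by omega), Finset.filter_insert]
  split_ifs
  · exact Finset.card_insert_of_notMem (by simp)
  · rfl

lemma tcount_add_of_forall_inR {a t : ℕ} (h : ∀ s, 1 ≤ s → s ≤ t → inR (a + s)) :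
    tcount (a + t) = tcount a + t := by
  induction t with
  | zero => rfl
  | succ t ih =>
    rw [← add_assoc, tcount_add_one,
      if_pos (show inR (a + t + 1) from h (t + 1) (by omega) le_rfl),
      ih fun s hs hst => h s hs (by omega), add_assoc]

lemma tcount_add_of_forall_not_inR {a t : ℕ} (h : ∀ s, 1 ≤ s → s ≤ t → ¬ inR (a + s)) :
    tcount (a + t) = tcount a := by
  induction t with
  | zero => rfl
  | succ t ih =>
    rw [← add_assoc, tcount_add_one,
      if_neg (show ¬ inR (a + t + 1) from h (t + 1) (by omega) le_rfl),
      ih fun s hs hst => h s hs (by omega), add_zero]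

lemma tcount_add_one_pow_three (d : ℕ) : tcount ((d + 1) ^ 3) = (d + 1) * d / 2 := by
  induction d with
  | zero => decide
  | succ d ih =>
    obtain ⟨g, hg⟩ : ∃ g, (d + 1 + 1) ^ 3 = ((d + 1) ^ 3 + (d + 1)) + g :=
      Nat.exists_eq_add_of_le (by nlinarith)
    rw [hg, tcount_add_of_forall_not_inR fun s hs hst =>
        not_inR_of_cube_add_lt (m := d + 1) (by omega) (by omega),
      tcount_add_of_forall_inR fun s hs hst => inR_cube_add hs hst, ih]
    have hT := succ_mul_self_div_two_mul_two d
    have : (d + 1 + 1) * (d + 1) = (d + 1) * d + 2 * (d + 1) := by ring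
    omega

lemma tcount_add_one_pow_three_add {d t : ℕ} (ht : t ≤ d + 1) :
    tcount ((d + 1) ^ 3 + t) = (d + 1) * d / 2 + t := by
  rw [tcount_add_of_forall_inR fun s hs hst => inR_cube_add hs (hst.trans ht),
    tcount_add_one_pow_three]

lemma deltaN_apply_add_one_pow_three_add (N : ℕ) (x : ℕ → ℕ) {d r : ℕ} (hr : r ≤ d) :
    deltaN N x ((d + 1) ^ 3 + r) = gN N x r := by
  have hR : inR ((d + 1) ^ 3 + (r + 1)) := inR_cube_add (by omega) (by omega)
  have ht : tcount ((d + 1) ^ 3 + (r + 1)) - 1 = (d + 1) * d / 2 + r := by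
    rw [tcount_add_one_pow_three_add (by omega)]
    omega
  simp only [deltaN, psiN, ← add_assoc] at hR ht ⊢
  rw [if_pos hR, ht, thetaN_apply _ hr]

lemma shift_iterate_apply (x : ℕ → ℕ) (n i : ℕ) : (shift^[n] x) i = x (n + i) := by
  induction n generalizing x with
  | zero => simp
  | succ n ih => rw [Function.iterate_succ_apply, ih, shift, add_right_comm, add_assoc]

lemma frequently_shift_iterate_deltaN_eq_gN (N M : ℕ) (x y : ℕ → ℕ) (p L : ℕ) :
    ∃ᶠ n in atTop, ∀ i < L,
      (shift^[n] (deltaN N x)) i = gN N x (p + i) ∧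
        (shift^[n] (deltaN M y)) i = gN M y (p + i) := by
  refine frequently_atTop.mpr fun a => ⟨(a + p + L + 1) ^ 3 + p, ?_, fun i hi => ?_⟩
  · have := Nat.le_self_pow (n := 3) (by norm_num) (a + p + L + 1)
    omega
  · rw [shift_iterate_apply, shift_iterate_apply, add_assoc _ p]
    exact ⟨deltaN_apply_add_one_pow_three_add N x (by omega),
      deltaN_apply_add_one_pow_three_add M y (by omega)⟩

lemma dseq_nonneg (x y : ℕ → ℕ) : 0 ≤ dseq x y := by
  unfold dseq
  split_ifs <;> positivity

lemma dseq_le_one (x y : ℕ → ℕ) : dseq x y ≤ 1 := by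
  unfold dseq
  split_ifs
  · exact pow_le_one₀ (by norm_num) (by norm_num)
  · exact zero_le_one

lemma dseq_eq_one {x y : ℕ → ℕ} (h : x 0 ≠ y 0) : dseq x y = 1 := by
  rw [dseq, dif_pos ⟨0, h⟩, (Nat.find_eq_zero _).mpr h, pow_zero]

lemma dseq_le_inv_two_pow {x y : ℕ → ℕ} {L : ℕ} (h : ∀ j < L, x j = y j) :
    dseq x y ≤ (2 : ℝ)⁻¹ ^ L := by
  unfold dseq
  split_ifs with hne
  · exact pow_le_pow_of_le_one (by norm_num) (by norm_num)
      ((Nat.le_find_iff hne L).mpr fun j hj => not_not_intro (h j hj))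
  · positivity

/-- `S` is a scrambled set for the shift on `ℕ^ℕ`. -/
theorem Sset_scrambled : ∀ u ∈ Sset, ∀ v ∈ Sset, u ≠ v →
    0 < Filter.limsup (fun n => dseq (shift^[n] u) (shift^[n] v)) Filter.atTop ∧
    Filter.liminf (fun n => dseq (shift^[n] u) (shift^[n] v)) Filter.atTop = 0 := by
  intro u hu v hv huv
  simp only [Sset, mem_iUnion, mem_image] at hu hv
  obtain ⟨N, -, x, -, rfl⟩ := hu
  obtain ⟨M, -, y, -, rfl⟩ := hv
  set f := fun n => dseq (shift^[n] (deltaN N x)) (shift^[n] (deltaN M y))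
  have hf_le : IsBoundedUnder (· ≤ ·) atTop f :=
    isBoundedUnder_of ⟨1, fun n => dseq_le_one _ _⟩
  have hf_ge : IsBoundedUnder (· ≥ ·) atTop f :=
    isBoundedUnder_of ⟨0, fun n => dseq_nonneg _ _⟩
  constructor
  · obtain ⟨p, hp⟩ : ∃ p, gN N x p ≠ gN M y p := Function.ne_iff.mp fun h => huv <| by
      obtain ⟨rfl, rfl⟩ := gN_inj.mp h
      rfl
    refine one_pos.trans_le (le_limsup_of_frequently_le ?_ hf_le)
    refine (frequently_shift_iterate_deltaN_eq_gN N M x y p 1).mono fun n hn => ?_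
    obtain ⟨hx, hy⟩ := hn 0 one_pos
    exact (dseq_eq_one (by rwa [hx, hy])).ge
  · refine le_antisymm ?_ (le_liminf_of_le hf_le.isCoboundedUnder_ge
      (.of_forall fun n => dseq_nonneg _ _))
    refine ge_of_tendsto' (tendsto_pow_atTop_nhds_zero_of_lt_one (by norm_num : (0 : ℝ) ≤ 2⁻¹)
      (by norm_num)) fun d => liminf_le_of_frequently_le ?_ hf_ge
    -- `g_N(x)` and `g_M(y)` both have a block of `d + 1` ones starting at `(d + 1) * d + 1`
    refine (frequently_shift_iterate_deltaN_eq_gN N M x y ((d + 1) * d + 1) d).mono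
      fun n hn => ?_
    refine dseq_le_inv_two_pow fun i hi => ?_
    obtain ⟨hx, hy⟩ := hn i hi
    rw [hx, hy, add_right_comm, gN_apply_eq_one _ _ hi.le, gN_apply_eq_one _ _ hi.le]
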